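/- arXiv:2508.01094 — 5 statements merged into one kernel-verified Lean document; each statement's English description precedes it below -/
import Mathlib

section
/- Let X be a normed linear space and E ⊆ X. Then 0 ∈ ri(co E) if and only if there exist m ∈ N with m ≥ dim(span E) + 1, points z^1,...,z^m ∈ E and scalars t^1,...,t^m > 0 such that the sum of t^i z^i is 0, the sum of t^i is 1, and span{z^1,...,z^m} = span E. -/
/-!
If `0 ∈ ri (co E)`, pick `f₁, …, fₙ ∈ E` spanning `span E`. For small `δ > 0` the point
`-δ ∑ fᵢ` still lies in `co E`; writing it as a positive convex combination of points of `E` and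
adding `δ ∑ fᵢ` gives a positive combination of points of `E` that vanishes and spans `span E`.
After normalising the weights, such a family is spanning and linearly dependent, so it has more
than `dim span E` members.

Conversely, `s ↦ ∑ sᵢ zᵢ` is an open map from `ℝᵐ` onto `span E`. As `t` lies in its kernel, `s`
has the same image as `s + (1 - ∑ sᵢ) t`, which for `s` near `0` is a vector of positive weights
with sum `1`; hence a neighbourhood of `0` in `span E` lies in `co E`.
-/

open Set Filter Topology Submodule Module

theorem mem_intrinsicInterior_iff_exists_nhds {𝕜 V P : Type*} [Ring 𝕜] [AddCommGroup V]
    [Module 𝕜 V] [TopologicalSpace P] [AddTorsor V P] {s : Set P} {x : P} :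
    x ∈ intrinsicInterior 𝕜 s ↔ x ∈ s ∧ ∃ u ∈ 𝓝 x, u ∩ affineSpan 𝕜 s ⊆ s := by
  constructor
  · rintro ⟨y, hy, rfl⟩
    have hys : y ∈ ((↑) ⁻¹' s : Set (affineSpan 𝕜 s)) := interior_subset hy
    obtain ⟨u, hu, hus⟩ := (mem_nhds_subtype _ _ _).mp (mem_interior_iff_mem_nhds.mp hy)
    exact ⟨hys, u, hu, fun z ⟨hzu, hzA⟩ => hus (show (⟨z, hzA⟩ : affineSpan 𝕜 s) ∈ _ from hzu)⟩
  · rintro ⟨hx, u, hu, hus⟩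
    refine ⟨⟨x, subset_affineSpan 𝕜 s hx⟩, ?_, rfl⟩
    exact mem_interior_iff_mem_nhds.mpr
      ((mem_nhds_subtype _ _ _).mpr ⟨u, hu, fun z hz => hus ⟨hz, z.2⟩⟩)

theorem coe_affineSpan_eq_span_of_zero_mem {k V : Type*} [Ring k] [AddCommGroup V] [Module k V]
    {s : Set V} (h0 : (0 : V) ∈ affineSpan k s) :
    (affineSpan k s : Set V) = span k s := by
  rw [← affineSpan_insert_eq_affineSpan k h0, affineSpan_insert_zero]

theorem finrank_span_range_lt_card_of_not_linearIndependent {R M ι : Type*} [DivisionRing R]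
    [AddCommGroup M] [Module R M] [Fintype ι] {z : ι → M} (hz : ¬ LinearIndependent R z) :
    finrank R (span R (range z)) < Fintype.card ι := by
  rw [linearIndependent_iff_card_eq_finrank_span] at hz
  exact lt_of_le_of_ne (finrank_range_le_card z) (Ne.symm hz)

theorem exists_fin_convex_weights_of_pos_sum_smul_eq_zero {𝕜 M ι : Type*} [Field 𝕜]
    [LinearOrder 𝕜] [IsStrictOrderedRing 𝕜] [AddCommGroup M] [Module 𝕜 M] [Fintype ι] [Nonempty ι]
    {z : ι → M} {a : ι → 𝕜} (ha : ∀ i, 0 < a i) (h0 : ∑ i, a i • z i = 0) :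
    ∃ (m : ℕ) (z' : Fin m → M) (t : Fin m → 𝕜),
      finrank 𝕜 (span 𝕜 (range z)) + 1 ≤ m ∧ range z' = range z ∧ (∀ i, 0 < t i) ∧
        ∑ i, t i • z' i = 0 ∧ ∑ i, t i = 1 := by
  have hdep : ¬ LinearIndependent 𝕜 z :=
    Fintype.not_linearIndependent_iff.mpr ⟨a, h0, Classical.arbitrary ι, (ha _).ne'⟩
  set S := ∑ i, a i
  have hS : 0 < S := Finset.sum_pos (fun i _ => ha i) Finset.univ_nonempty
  let e := Fintype.equivFin ι
  refine ⟨Fintype.card ι, z ∘ e.symm, fun j => a (e.symm j) / S,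
    finrank_span_range_lt_card_of_not_linearIndependent hdep, e.symm.surjective.range_comp z,
    fun j => div_pos (ha _) hS, ?_, ?_⟩
  · refine (e.symm.sum_comp fun i => (a i / S) • z i).trans ?_
    simp only [div_eq_inv_mul, mul_smul, ← Finset.smul_sum, h0, smul_zero]
  · rw [e.symm.sum_comp fun i => a i / S, ← Finset.sum_div, div_self hS.ne']

section ConvexHull

variable {X : Type*} [AddCommGroup X] [Module ℝ X] [TopologicalSpace X] {E : Set X}

theorem zero_mem_intrinsicInterior_convexHull_iff :
    (0 : X) ∈ intrinsicInterior ℝ (convexHull ℝ E) ↔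
      (0 : X) ∈ convexHull ℝ E ∧ ∃ u ∈ 𝓝 (0 : X), u ∩ span ℝ E ⊆ convexHull ℝ E := by
  rw [mem_intrinsicInterior_iff_exists_nhds, and_congr_right_iff]
  intro h0
  have h0' : (0 : X) ∈ affineSpan ℝ E := by
    simpa only [affineSpan_convexHull, SetLike.mem_coe] using subset_affineSpan ℝ _ h0
  rw [affineSpan_convexHull, coe_affineSpan_eq_span_of_zero_mem h0']

theorem exists_fin_pos_combination_eq_zero_of_nhds_inter_span_subset [ContinuousSMul ℝ X]
    [FiniteDimensional ℝ (span ℝ E)] {u : Set X} (hu : u ∈ 𝓝 0)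
    (huE : u ∩ span ℝ E ⊆ convexHull ℝ E) :
    ∃ (m : ℕ) (z : Fin m → X) (t : Fin m → ℝ),
      finrank ℝ (span ℝ E) + 1 ≤ m ∧ (∀ i, z i ∈ E) ∧ (∀ i, 0 < t i) ∧
        ∑ i, t i • z i = 0 ∧ ∑ i, t i = 1 ∧ span ℝ (range z) = span ℝ E := by
  obtain ⟨f, hfE, hfspan, -⟩ := exists_fun_fin_finrank_span_eq ℝ E
  set p := ∑ i, f i
  have hp : p ∈ span ℝ E := sum_mem fun i _ => subset_span (hfE i)
  have hsmall : ∀ᶠ δ in 𝓝 (0 : ℝ), (-δ) • p ∈ u :=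
    (Continuous.tendsto (by fun_prop : Continuous fun δ : ℝ => (-δ) • p) 0).eventually
      (by simpa using hu)
  obtain ⟨δ, hδu, hδ⟩ :=
    ((hsmall.filter_mono nhdsWithin_le_nhds).and (self_mem_nhdsWithin (s := Ioi 0))).exists
  have hmem : (-δ) • p ∈ convexHull ℝ E := huE ⟨hδu, smul_mem _ _ hp⟩
  obtain ⟨ι, _, y, w, hyE, -, hw, hw1, hwy⟩ := eq_pos_convex_span_of_mem_convexHull hmem
  have : Nonempty ι := by
    obtain ⟨i, -, -⟩ := Finset.exists_ne_zero_of_sum_ne_zero (hw1.trans_ne one_ne_zero)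
    exact ⟨i⟩
  have hzE : range (Sum.elim f y) ⊆ E := by
    rw [Set.Sum.elim_range]
    exact union_subset (range_subset_iff.mpr hfE) hyE
  have hzspan : span ℝ (range (Sum.elim f y)) = span ℝ E :=
    le_antisymm (span_le.mpr (hzE.trans subset_span))
      (hfspan.symm.trans_le (span_mono (range_subset_iff.mpr fun i => ⟨Sum.inl i, rfl⟩)))
  obtain ⟨m, z, t, hm, hz, ht, h0, h1⟩ :=
    exists_fin_convex_weights_of_pos_sum_smul_eq_zero (z := Sum.elim f y)
      (a := Sum.elim (fun _ => δ) w) (fun i => i.rec (fun _ => hδ) hw)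
      (by simp [Fintype.sum_sum_type, ← Finset.smul_sum, hwy, p])
  refine ⟨m, z, t, hzspan ▸ hm, fun i => hzE (hz ▸ mem_range_self i), ht, h0, h1, hz ▸ hzspan⟩

theorem exists_nhds_inter_span_subset_convexHull [IsTopologicalAddGroup X] [ContinuousSMul ℝ X]
    [T2Space X] {ι : Type*} [Fintype ι] {z : ι → X} {t : ι → ℝ} (hzE : ∀ i, z i ∈ E)
    (ht : ∀ i, 0 < t i) (h0 : ∑ i, t i • z i = 0) (h1 : ∑ i, t i = 1)
    (hspan : span ℝ (range z) = span ℝ E) :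
    ∃ u ∈ 𝓝 (0 : X), u ∩ span ℝ E ⊆ convexHull ℝ E := by
  set L := Fintype.linearCombination ℝ z
  have hL : LinearMap.range L = span ℝ E := by rw [Fintype.range_linearCombination, hspan]
  let Φ : (ι → ℝ) →ₗ[ℝ] span ℝ E := L.codRestrict _ fun c => hL ▸ LinearMap.mem_range_self L c
  have hΦ : Function.Surjective Φ := by
    rintro ⟨x, hx⟩
    obtain ⟨c, rfl⟩ := LinearMap.mem_range.mp (hL ▸ hx)
    exact ⟨c, rfl⟩
  let ψ : (ι → ℝ) → (ι → ℝ) := fun s => s + (1 - ∑ i, s i) • t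
  have hLt : L t = 0 := by simpa [L, Fintype.linearCombination_apply] using h0
  have hLψ : ∀ s, L (ψ s) = L s := fun s => by
    simp only [ψ, map_add, map_smul, hLt, smul_zero, add_zero]
  have hψ1 : ∀ s, ∑ i, ψ s i = 1 := by
    intro s
    simp [ψ, Finset.sum_add_distrib, ← Finset.mul_sum, h1]
  have hW : {s | ∀ i, 0 < ψ s i} ∈ 𝓝 (0 : ι → ℝ) := by
    have hψ0 : ψ 0 = t := by simp [ψ]
    have hcont : Continuous ψ := by fun_prop
    show ψ ⁻¹' {r | ∀ i, 0 < r i} ∈ _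
    refine hcont.continuousAt.preimage_mem_nhds ?_
    rw [hψ0]
    exact eventually_all.mpr fun i =>
      (continuous_apply i).continuousAt.eventually (eventually_gt_nhds (ht i))
  have : FiniteDimensional ℝ (span ℝ E) :=
    hspan ▸ FiniteDimensional.span_of_finite ℝ (finite_range z)
  have hΦW : Φ '' {s | ∀ i, 0 < ψ s i} ∈ 𝓝 0 := by
    simpa using (LinearMap.isOpenMap_of_finiteDimensional Φ hΦ).image_mem_nhds hW
  obtain ⟨u, hu, huΦ⟩ := (mem_nhds_subtype _ _ _).mp hΦW
  refine ⟨u, hu, ?_⟩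
  rintro x ⟨hxu, hxE⟩
  obtain ⟨s, hs, hsx⟩ := huΦ (show (⟨x, hxE⟩ : span ℝ E) ∈ Subtype.val ⁻¹' u from hxu)
  refine mem_convexHull_of_exists_fintype (ψ s) z (fun i => (hs i).le) (hψ1 s) hzE ?_
  rw [← Fintype.linearCombination_apply, hLψ]
  exact congrArg Subtype.val hsx

end ConvexHull

/-- Carathéodory: For a normed space `X` and `E ⊆ X` with finite-dimensional
span, `0 ∈ ri (co E)` iff there exist `m ≥ dim span E + 1`, points `zⁱ ∈ E` and weights
`tⁱ > 0` with `∑ tⁱ zⁱ = 0`, `∑ tⁱ = 1`, and `span {z¹,…,zᵐ} = span E`. -/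
theorem stmt3 {X : Type*} [NormedAddCommGroup X] [NormedSpace ℝ X] (E : Set X)
    [FiniteDimensional ℝ (Submodule.span ℝ E)] :
    (0 : X) ∈ intrinsicInterior ℝ (convexHull ℝ E) ↔
      ∃ (m : ℕ) (z : Fin m → X) (t : Fin m → ℝ),
        Module.finrank ℝ (Submodule.span ℝ E) + 1 ≤ m ∧
        (∀ i, z i ∈ E) ∧ (∀ i, 0 < t i) ∧
        ∑ i, t i • z i = 0 ∧ ∑ i, t i = 1 ∧
        Submodule.span ℝ (Set.range z) = Submodule.span ℝ E := by
  rw [zero_mem_intrinsicInterior_convexHull_iff]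
  constructor
  · rintro ⟨-, u, hu, huE⟩
    exact exists_fin_pos_combination_eq_zero_of_nhds_inter_span_subset hu huE
  · rintro ⟨m, z, t, -, hzE, ht, h0, h1, hspan⟩
    exact ⟨mem_convexHull_of_exists_fintype t z (fun i => (ht i).le) h1 hzE h0,
      exists_nhds_inter_span_subset_convexHull hzE ht h0 h1 hspan⟩
end

section
/- Let Ω ⊆ R^n be open and bounded and F ⊆ R^n. There exists u ∈ W_0^{1,∞}(Ω) with Du ∈ F almost everywhere in Ω if and only if 0 ∈ F ∪ int(co F). Moreover, when 0 ∈ int(co F), u can be chosen with u ≥ 0 and ∫_Ω u > 0. -/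
/-!
If `0 ∉ int (co F)`, a nonzero functional `ξ ⬝ᵥ ·` is `≤ 0` on `F` (Hahn–Banach when the
interior is nonempty; otherwise `F` lies in an affine hyperplane). Then `u` is nonincreasing along
almost every line in the direction `ξ`; vanishing outside the bounded set `Ω`, it vanishes on these
lines, hence everywhere, and `Du = 0` lies in `F` at some point of `Ω`.

If `0 ∈ int (co F)`, then already `0 ∈ int (co G)` for a finite `G ⊆ F`. The pyramid
`max (min_{v ∈ G} (1 + v ⬝ᵥ x)) 0` is Lipschitz, positive exactly on the bounded convex polytope
`P = {x | ∀ v ∈ G, -1 < v ⬝ᵥ x}`, and its gradient lies in `G` wherever it is differentiable in `P`.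
By Vitali's covering theorem, `Ω` is filled up to a null set by disjoint homothetic copies
`c + r • P`; since `∂P` is null, gluing the rescaled pyramids `r * w (r⁻¹ • (x - c))` gives `u`.
-/

noncomputable section
open Matrix MeasureTheory

/-- The (a.e. defined) gradient of a scalar function `u : ℝⁿ → ℝ`. -/
def grad {n : ℕ} (u : (Fin n → ℝ) → ℝ) (x : Fin n → ℝ) : Fin n → ℝ :=
  fun j => fderiv ℝ u x (Pi.single j 1)

open Set Filter Topology Bornology Function
open scoped NNReal

theorem ContinuousLinearMap.apply_eq_dotProduct {ι : Type*} [Fintype ι] [DecidableEq ι]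
    (f : (ι → ℝ) →L[ℝ] ℝ) (v : ι → ℝ) : f v = (fun j => f (Pi.single j 1)) ⬝ᵥ v :=
  (LinearMap.congr_fun ((dotProductEquiv ℝ ι).apply_symm_apply f.toLinearMap) v).symm

theorem grad_zero {n : ℕ} (x : Fin n → ℝ) : grad (0 : (Fin n → ℝ) → ℝ) x = 0 :=
  funext fun j => by simp [grad]

theorem grad_eq_of_fderiv_apply {n : ℕ} {u : (Fin n → ℝ) → ℝ} {x v : Fin n → ℝ}
    (h : ∀ y, fderiv ℝ u x y = v ⬝ᵥ y) : grad u x = v := by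
  funext j
  simp [grad, h, dotProduct_single]

theorem AbsolutelyContinuousOnInterval.le_of_ae_deriv_nonpos {g : ℝ → ℝ} {a b : ℝ}
    (hg : AbsolutelyContinuousOnInterval g a b) (hab : a ≤ b)
    (hd : ∀ᵐ t, t ∈ Ioo a b → deriv g t ≤ 0) : g b ≤ g a := by
  have hd' : 0 ≤ᵐ[volume.restrict (Icc a b)] fun t => -deriv g t := by
    rw [← Measure.restrict_congr_set Ioo_ae_eq_Icc, EventuallyLE,
      ae_restrict_iff' measurableSet_Ioo]
    filter_upwards [hd] with t ht htI
    simpa using ht htI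
  have := intervalIntegral.integral_nonneg_of_ae_restrict hab hd'
  rw [intervalIntegral.integral_neg, hg.integral_deriv_eq_sub] at this
  linarith

theorem LipschitzWith.eq_zero_of_ae_deriv_nonpos {g : ℝ → ℝ} {K : ℝ≥0}
    (hg : LipschitzWith K g) (hb : IsBounded (support g)) (hd : ∀ᵐ t, g t ≠ 0 → deriv g t ≤ 0) :
    g = 0 := by
  funext t
  by_contra ht
  obtain ⟨R, hR0, hR⟩ := hb.subset_closedBall_lt 0 0
  have hfar : ∀ s, R < |s| → s ∈ {s | g s = 0} := fun s hs => by
    by_contra h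
    have := hR h
    rw [Metric.mem_closedBall, Real.dist_0_eq_abs] at this
    exact this.not_gt hs
  have hZ : IsClosed {s | g s = 0} := isClosed_eq hg.continuous continuous_const
  -- `a` and `b` below are the zeros of `g` nearest to `t`, and `g` is antitone on `[a, b]`
  have haZ := (hZ.inter isClosed_Iic).csSup_mem
    ⟨-(R + |t| + 1), hfar _ (by rw [abs_neg, abs_of_pos (by positivity)]; linarith [abs_nonneg t]),
      by simp only [mem_Iic]; linarith [neg_abs_le t]⟩ ⟨t, fun _ h => h.2⟩
  have hbZ := (hZ.inter isClosed_Ici).csInf_mem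
    ⟨R + |t| + 1, hfar _ (by rw [abs_of_pos (by positivity)]; linarith [abs_nonneg t]),
      by simp only [mem_Ici]; linarith [le_abs_self t]⟩ ⟨t, fun _ h => h.2⟩
  set a := sSup ({s | g s = 0} ∩ Iic t)
  set b := sInf ({s | g s = 0} ∩ Ici t)
  have hgap : ∀ s ∈ Ioo a b, g s ≠ 0 := by
    rintro s ⟨has, hsb⟩ hs
    rcases le_total s t with hst | hst
    · exact (le_csSup (s := {s | g s = 0} ∩ Iic t) ⟨t, fun _ h => h.2⟩ ⟨hs, hst⟩).not_gt has
    · exact (csInf_le (s := {s | g s = 0} ∩ Ici t) ⟨t, fun _ h => h.2⟩ ⟨hs, hst⟩).not_gt hsb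
  have hanti : ∀ c d, a ≤ c → c ≤ d → d ≤ b → g d ≤ g c := fun c d hac hcd hdb =>
    (hg.lipschitzOnWith.absolutelyContinuousOnInterval).le_of_ae_deriv_nonpos hcd
      (hd.mono fun s hs hsI => hs (hgap s ⟨hac.trans_lt hsI.1, hsI.2.trans_le hdb⟩))
  have h1 := hanti a t le_rfl haZ.2 hbZ.2
  have h2 := hanti t b haZ.2 hbZ.2 le_rfl
  rw [haZ.1.out] at h1
  rw [hbZ.1.out] at h2
  exact ht (le_antisymm h1 h2)

section FiniteDimensional

variable {E : Type*} [NormedAddCommGroup E] [NormedSpace ℝ E] [FiniteDimensional ℝ E]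

theorem LipschitzWith.eq_zero_of_ae_fderiv_apply_nonpos [MeasurableSpace E] [BorelSpace E]
    (μ : Measure E) [μ.IsAddHaarMeasure] {u : E → ℝ} {K : ℝ≥0} (hu : LipschitzWith K u)
    (hb : IsBounded (support u)) {ξ : E} (hξ : ξ ≠ 0)
    (hd : ∀ᵐ y ∂μ, u y ≠ 0 → fderiv ℝ u y ξ ≤ 0) : u = 0 := by
  obtain ⟨s, hs_ae, hs_meas, hs⟩ := (hd.and (hu.ae_differentiableAt (μ := μ))).exists_measurable_mem
  let L : ℝ →L[ℝ] E := ContinuousLinearMap.smulRight (1 : ℝ →L[ℝ] ℝ) ξ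
  have hlines : ∀ᵐ y ∂μ, ∀ᵐ t, y + L t ∈ s :=
    (ae_ae_add_linearMap_mem_iff L.toLinearMap volume μ hs_meas).2 hs_ae
  obtain ⟨R, hR⟩ := hb.subset_closedBall 0
  refine (hu.continuous.ae_eq_iff_eq μ continuous_zero).1 ?_
  filter_upwards [hlines] with y hy
  let g : ℝ → ℝ := fun t => u (y + L t)
  have hLt : ∀ t, L t = t • ξ := fun t => by simp [L]
  have hg : LipschitzWith (K * (0 + ‖L‖₊)) g := hu.comp ((LipschitzWith.const y).add L.lipschitz)
  have hgb : IsBounded (support g) := by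
    refine (Metric.isBounded_closedBall (x := (0 : ℝ)) (r := (R + ‖y‖) / ‖ξ‖)).subset ?_
    intro t ht
    have hnorm : ‖y + t • ξ‖ ≤ R := by simpa [hLt] using hR ht
    rw [Metric.mem_closedBall, dist_zero_right, le_div_iff₀ (norm_pos_iff.2 hξ), ← norm_smul]
    calc ‖t • ξ‖ = ‖(y + t • ξ) - y‖ := by rw [add_sub_cancel_left]
      _ ≤ R + ‖y‖ := (_root_.norm_sub_le _ _).trans (by linarith)
  have hgd : ∀ᵐ t, g t ≠ 0 → deriv g t ≤ 0 := by
    filter_upwards [hy] with t ht hgt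
    have hL : HasDerivAt (fun t => y + L t) ξ t := by
      simpa [hLt] using ((hasDerivAt_id t).smul_const ξ).const_add y
    have hgt' : HasDerivAt g (fderiv ℝ u (y + L t) ξ) t :=
      (hs _ ht).2.hasFDerivAt.comp_hasDerivAt t hL
    rw [hgt'.deriv]
    exact (hs _ ht).1 hgt
  have := congr_fun (hg.eq_zero_of_ae_deriv_nonpos hgb hgd) 0
  simpa [g] using this

theorem exists_ne_zero_forall_nonpos_of_zero_notMem_interior_convexHull {s : Set E}
    (hs : s.Nonempty) (h : (0 : E) ∉ interior (convexHull ℝ s)) :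
    ∃ f : E →L[ℝ] ℝ, f ≠ 0 ∧ ∀ v ∈ s, f v ≤ 0 := by
  by_cases hint : (interior (convexHull ℝ s)).Nonempty
  · obtain ⟨f, hf0, hf⟩ :=
      geometric_hahn_banach_of_nonempty_interior_point (convex_convexHull ℝ s) h hint
    exact ⟨f, hf0, fun v hv => by simpa using hf v (subset_convexHull ℝ s hv)⟩
  -- Otherwise `s` lies in an affine hyperplane `{f = c}`, and `f` or `-f` will do.
  have hspan : vectorSpan ℝ s ≠ ⊤ := by
    rw [(convex_convexHull ℝ s).interior_nonempty_iff_affineSpan_eq_top,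
      affineSpan_convexHull] at hint
    rwa [← direction_affineSpan, Ne,
      AffineSubspace.direction_eq_top_iff_of_nonempty (hs.mono (subset_affineSpan ℝ s))]
  obtain ⟨f, hf0, hfs⟩ := Submodule.exists_dual_map_eq_bot_of_lt_top hspan.lt_top inferInstance
  obtain ⟨p, hp⟩ := hs
  have hconst : ∀ v ∈ s, f v = f p := fun v hv => by
    have : f (v -ᵥ p) ∈ (vectorSpan ℝ s).map f :=
      Submodule.mem_map_of_mem (vsub_mem_vectorSpan ℝ hv hp)
    rw [hfs, Submodule.mem_bot, vsub_eq_sub, map_sub, sub_eq_zero] at this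
    exact this
  have hF0 : LinearMap.toContinuousLinearMap f ≠ 0 := by simpa using hf0
  rcases le_total (f p) 0 with hle | hge
  · exact ⟨LinearMap.toContinuousLinearMap f, hF0, fun v hv => by simpa [hconst v hv] using hle⟩
  · exact ⟨-LinearMap.toContinuousLinearMap f, neg_ne_zero.2 hF0,
      fun v hv => by simpa [hconst v hv] using hge⟩

theorem exists_finset_subset_mem_interior_convexHull {s : Set E} {x : E}
    (hx : x ∈ interior (convexHull ℝ s)) :
    ∃ G : Finset E, ↑G ⊆ s ∧ x ∈ interior (convexHull ℝ (G : Set E)) := by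
  obtain ⟨b, hxb, hbs⟩ :=
    exists_mem_interior_convexHull_affineBasis (mem_interior_iff_mem_nhds.1 hx)
  have : ∀ i, ∃ T : Finset E, ↑T ⊆ s ∧ b i ∈ convexHull ℝ (T : Set E) := fun i => by
    have := hbs (subset_convexHull ℝ _ (mem_range_self i))
    rw [convexHull_eq_union_convexHull_finite_subsets] at this
    simpa using this
  choose T hTs hbT using this
  classical
  refine ⟨Finset.univ.biUnion T, by simpa using hTs, interior_mono ?_ hxb⟩
  refine convexHull_min ?_ (convex_convexHull ℝ _)
  rintro _ ⟨i, rfl⟩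
  refine convexHull_mono ?_ (hbT i)
  intro v hv
  simpa using ⟨i, hv⟩

end FiniteDimensional

theorem zero_mem_union_interior_convexHull_of_grad_mem {n : ℕ} {Ω F : Set (Fin n → ℝ)}
    (hΩo : IsOpen Ω) (hΩb : IsBounded Ω) (hΩne : Ω.Nonempty) {u : (Fin n → ℝ) → ℝ} {C : ℝ≥0}
    (hu : LipschitzWith C u) (hz : ∀ x ∉ Ω, u x = 0) (hF : ∀ᵐ x, x ∈ Ω → grad u x ∈ F) :
    (0 : Fin n → ℝ) ∈ F ∪ interior (convexHull ℝ F) := by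
  refine or_iff_not_imp_right.2 fun h0 => ?_
  obtain ⟨x₀, hx₀Ω, hx₀F⟩ : ∃ x ∈ Ω, grad u x ∈ F := by
    by_contra! h
    exact (hΩo.measure_pos volume hΩne).ne'
      (measure_mono_null (t := {x | ¬(x ∈ Ω → grad u x ∈ F)})
        (fun x hx hxF => h x hx (hxF hx)) (ae_iff.1 hF))
  obtain ⟨f, hf0, hfF⟩ :=
    exists_ne_zero_forall_nonpos_of_zero_notMem_interior_convexHull ⟨_, hx₀F⟩ h0
  set ξ : Fin n → ℝ := fun j => f (Pi.single j 1)
  have hξ : ξ ≠ 0 := fun h => hf0 (ContinuousLinearMap.ext fun v => by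
    rw [f.apply_eq_dotProduct]; change ξ ⬝ᵥ v = 0; simp [h])
  have hu0 : u = 0 := by
    refine hu.eq_zero_of_ae_fderiv_apply_nonpos volume
      (hΩb.subset fun x hx => by_contra fun hxΩ => hx (hz x hxΩ)) hξ ?_
    filter_upwards [hF] with y hy huy
    rw [(fderiv ℝ u y).apply_eq_dotProduct, dotProduct_comm, ← f.apply_eq_dotProduct]
    exact hfF _ (hy (by_contra fun hyΩ => huy (hz y hyΩ)))
  rwa [hu0, grad_zero] at hx₀F

theorem HasFDerivAt.fderiv_eq_of_eventually_le {E : Type*} [NormedAddCommGroup E]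
    [NormedSpace ℝ E] {u φ : E → ℝ} {φ' : E →L[ℝ] ℝ} {x : E} (hφ : HasFDerivAt φ φ' x)
    (hu : DifferentiableAt ℝ u x) (hle : ∀ᶠ y in 𝓝 x, u y ≤ φ y) (heq : u x = φ x) :
    fderiv ℝ u x = φ' := by
  have hmin : IsLocalMin (fun y => φ y - u y) x := by
    filter_upwards [hle] with y hy
    simp only [heq, sub_self]
    linarith
  exact (sub_eq_zero.1 (hmin.hasFDerivAt_eq_zero (hφ.sub hu.hasFDerivAt))).symm

section Pyramid

variable {n : ℕ} (G : Finset (Fin n → ℝ))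

def polytope : Set (Fin n → ℝ) := {x | ∀ v ∈ G, -1 < v ⬝ᵥ x}

theorem isOpen_polytope : IsOpen (polytope G) := by
  simp only [polytope, ofPred_forall]
  exact isOpen_biInter_finset fun v _ => isOpen_lt continuous_const (by fun_prop)

theorem convex_setOf_neg_one_lt_dotProduct (x : Fin n → ℝ) : Convex ℝ {v | -1 < v ⬝ᵥ x} :=
  convex_halfSpace_gt ⟨fun v w => add_dotProduct v w x, fun c v => smul_dotProduct c v x⟩ _

theorem convex_polytope : Convex ℝ (polytope G) := by
  simp only [polytope, ofPred_forall]
  refine convex_iInter₂ fun v _ => ?_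
  simp_rw [dotProduct_comm v]
  exact convex_setOf_neg_one_lt_dotProduct v

theorem zero_mem_polytope : (0 : Fin n → ℝ) ∈ polytope G := fun v _ => by simp

theorem polytope_subset_closedBall {δ : ℝ} (hδ : 0 < δ)
    (hG : Metric.closedBall 0 δ ⊆ convexHull ℝ (G : Set (Fin n → ℝ))) :
    polytope G ⊆ Metric.closedBall 0 δ⁻¹ := by
  intro x hx
  have hco : ∀ y ∈ Metric.closedBall (0 : Fin n → ℝ) δ, -1 < y ⬝ᵥ x := fun y hy =>
    convexHull_min (fun v hv => hx v hv) (convex_setOf_neg_one_lt_dotProduct x) (hG hy)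
  rw [mem_closedBall_zero_iff, pi_norm_le_iff_of_nonneg (by positivity)]
  intro j
  have h₁ := hco (Pi.single j δ) (by simp [Pi.norm_single, abs_of_pos hδ])
  have h₂ := hco (Pi.single j (-δ)) (by simp [Pi.norm_single, abs_of_pos hδ])
  simp only [single_dotProduct] at h₁ h₂
  rw [Real.norm_eq_abs, abs_le]
  constructor <;> nlinarith [mul_inv_cancel₀ hδ.ne', inv_pos.2 hδ]

variable (hG : G.Nonempty)

def pyramid (x : Fin n → ℝ) : ℝ := max (G.inf' hG fun v => 1 + v ⬝ᵥ x) 0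

theorem pyramid_nonneg (x : Fin n → ℝ) : 0 ≤ pyramid G hG x := le_max_right _ _

theorem pyramid_pos_iff {x : Fin n → ℝ} : 0 < pyramid G hG x ↔ x ∈ polytope G := by
  simp only [pyramid, lt_max_iff, lt_irrefl, or_false, Finset.lt_inf'_iff, polytope, mem_ofPred_eq]
  exact forall₂_congr fun v _ => by constructor <;> intro h <;> linarith

theorem pyramid_eq_zero {x : Fin n → ℝ} (hx : x ∉ polytope G) : pyramid G hG x = 0 :=
  (pyramid_nonneg G hG x).antisymm' (not_lt.1 ((pyramid_pos_iff G hG).not.2 hx))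

theorem pyramid_eq_inf' {x : Fin n → ℝ} (hx : x ∈ polytope G) :
    pyramid G hG x = G.inf' hG fun v => 1 + v ⬝ᵥ x :=
  max_eq_left (Finset.le_inf' hG _ fun v hv => by linarith [hx v hv])

theorem exists_lipschitzWith_pyramid : ∃ K, LipschitzWith K (pyramid G hG) := by
  let L : (Fin n → ℝ) → (Fin n → ℝ) →L[ℝ] ℝ :=
    fun v => LinearMap.toContinuousLinearMap (dotProductEquiv ℝ (Fin n) v)
  set K := G.sup fun v => ‖L v‖₊
  have hinf : LipschitzWith K (G.inf' hG fun v x => 1 + v ⬝ᵥ x) :=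
    Finset.inf'_induction hG _ (fun f hf g hg => by rw [← max_self K]; exact hf.min hg)
      fun v hv => by
        have := (LipschitzWith.const (1 : ℝ)).add (L v).lipschitz
        simpa [L] using this.weaken (by simpa using Finset.le_sup (f := fun v => ‖L v‖₊) hv)
  have := hinf.max_const 0
  simp only [Finset.inf'_apply] at this
  exact ⟨K, this⟩

theorem exists_fderiv_pyramid_eq {z : Fin n → ℝ} (hz : z ∈ polytope G)
    (hd : DifferentiableAt ℝ (pyramid G hG) z) :
    ∃ v ∈ G, ∀ y, fderiv ℝ (pyramid G hG) z y = v ⬝ᵥ y := by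
  obtain ⟨v, hv, hvz⟩ := Finset.exists_mem_eq_inf' hG fun v => 1 + v ⬝ᵥ z
  let L : (Fin n → ℝ) →L[ℝ] ℝ := LinearMap.toContinuousLinearMap (dotProductEquiv ℝ (Fin n) v)
  refine ⟨v, hv, fun y => ?_⟩
  have hφ : HasFDerivAt (fun y => 1 + v ⬝ᵥ y) L z := by simpa [L] using L.hasFDerivAt.const_add 1
  -- the pyramid lies below each of its faces and touches the face of `v` at `z`
  rw [hφ.fderiv_eq_of_eventually_le hd ?_ (by rw [pyramid_eq_inf' G hG hz, hvz])]
  · simp [L]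
  filter_upwards [(isOpen_polytope G).mem_nhds hz] with y hy
  rw [pyramid_eq_inf' G hG hy]
  exact Finset.inf'_le _ hv

end Pyramid

section Gluing

variable {ι X : Type*} {f : ι → X → ℝ} {S : ι → Set X}

theorem tsum_eq_of_mem_of_pairwise_disjoint (hS : Pairwise (Disjoint on S))
    (hfS : ∀ i, ∀ x ∉ S i, f i x = 0) {i : ι} {x : X} (hx : x ∈ S i) : ∑' j, f j x = f i x :=
  tsum_eq_single i fun j hj => hfS j x fun hxj => Set.disjoint_left.1 (hS hj) hxj hx

theorem lipschitzWith_tsum_of_pairwise_disjoint [PseudoMetricSpace X] {K : ℝ≥0}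
    (hS : Pairwise (Disjoint on S)) (hfS : ∀ i, ∀ x ∉ S i, f i x = 0) (hf : ∀ i, LipschitzWith K (f i)) (hf0 : ∀ i x, 0 ≤ f i x) :
    LipschitzWith K fun x => ∑' i, f i x := by
  have hle : ∀ i y, f i y ≤ ∑' j, f j y := fun i y => by
    by_cases hy : y ∈ S i
    · rw [tsum_eq_of_mem_of_pairwise_disjoint hS hfS hy]
    · rw [hfS i y hy]
      exact tsum_nonneg (hf0 · y)
  refine LipschitzWith.of_le_add_mul K fun x y => ?_
  by_cases hx : ∃ i, x ∈ S i
  · obtain ⟨i, hi⟩ := hx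
    rw [tsum_eq_of_mem_of_pairwise_disjoint hS hfS hi]
    linarith [(hf i).le_add_mul x y, hle i y]
  · push Not at hx
    simp only [hfS _ x (hx _), tsum_zero]
    have : 0 ≤ ∑' i, f i y := tsum_nonneg (hf0 · y)
    positivity

end Gluing

section Rescaling

variable {E : Type*} [NormedAddCommGroup E] [NormedSpace ℝ E]

/-- The image of `S` under the homothety `z ↦ a.1 + a.2 • z` (for `a.2 ≠ 0`). -/
def rescaledCopy (a : E × ℝ) (S : Set E) : Set E := (fun x => a.2⁻¹ • (x - a.1)) ⁻¹' S

/-- The graph of `w` moved by the same homothety; Lipschitz constants and gradients are kept. -/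
def rescaled (a : E × ℝ) (w : E → ℝ) (x : E) : ℝ := a.2 * w (a.2⁻¹ • (x - a.1))

variable {a : E × ℝ} {S : Set E}

theorem isOpen_rescaledCopy (hS : IsOpen S) : IsOpen (rescaledCopy a S) :=
  hS.preimage (by fun_prop)

theorem isClosed_rescaledCopy (hS : IsClosed S) : IsClosed (rescaledCopy a S) :=
  hS.preimage (by fun_prop)

theorem rescaledCopy_subset_closedBall (ha : 0 < a.2) {R : ℝ} (hS : S ⊆ Metric.closedBall 0 R) :
    rescaledCopy a S ⊆ Metric.closedBall a.1 (a.2 * R) := fun x hx => by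
  have := hS hx
  rw [mem_closedBall_zero_iff, norm_smul, norm_inv, Real.norm_of_nonneg ha.le,
    inv_mul_le_iff₀ ha] at this
  rwa [Metric.mem_closedBall, dist_eq_norm]

theorem ball_subset_rescaledCopy (ha : 0 < a.2) {ρ : ℝ} (hS : Metric.ball 0 ρ ⊆ S) :
    Metric.ball a.1 (a.2 * ρ) ⊆ rescaledCopy a S := fun x hx => hS <| by
  rw [Metric.mem_ball, dist_eq_norm] at hx
  rwa [mem_ball_zero_iff, norm_smul, norm_inv, Real.norm_of_nonneg ha.le, inv_mul_lt_iff₀ ha]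

theorem measure_rescaledCopy_eq_zero [MeasurableSpace E] [BorelSpace E] [FiniteDimensional ℝ E]
    (μ : Measure E) [μ.IsAddHaarMeasure] (ha : a.2 ≠ 0) (hS : μ S = 0) :
    μ (rescaledCopy a S) = 0 := by
  have : rescaledCopy a S = (fun x => x + -a.1) ⁻¹' ((fun x => a.2⁻¹ • x) ⁻¹' S) := by
    ext; simp [rescaledCopy, sub_eq_add_neg]
  rw [this, measure_preimage_add_right, Measure.addHaar_preimage_smul μ (inv_ne_zero ha), hS, mul_zero]

theorem lipschitzWith_rescaled (ha : 0 < a.2) {w : E → ℝ} {K : ℝ≥0} (hw : LipschitzWith K w) :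
    LipschitzWith K (rescaled a w) := by
  refine LipschitzWith.of_dist_le_mul fun x y => ?_
  have := hw.dist_le_mul (a.2⁻¹ • (x - a.1)) (a.2⁻¹ • (y - a.1))
  rw [dist_smul₀, dist_sub_right, Real.norm_of_nonneg (inv_nonneg.2 ha.le)] at this
  rw [rescaled, rescaled, Real.dist_eq, ← mul_sub, abs_mul, abs_of_pos ha, ← Real.dist_eq]
  calc a.2 * dist (w _) (w _) ≤ a.2 * (K * (a.2⁻¹ * dist x y)) := by gcongr
    _ = K * dist x y := by field_simp

theorem hasFDerivAt_of_eventuallyEq_rescaled (ha : a.2 ≠ 0) {u w : E → ℝ} {x : E}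
    (hu : DifferentiableAt ℝ u x) (h : u =ᶠ[𝓝 x] rescaled a w) :
    HasFDerivAt w (fderiv ℝ u x) (a.2⁻¹ • (x - a.1)) := by
  set z := a.2⁻¹ • (x - a.1)
  have hx : a.1 + a.2 • z = x := by simp [z, smul_smul, ha]
  have hφ : HasFDerivAt (fun z => a.1 + a.2 • z) (a.2 • ContinuousLinearMap.id ℝ E) z :=
    ((hasFDerivAt_id z).const_smul a.2).const_add a.1
  rw [← hx] at hu h
  have hcomp := (hu.hasFDerivAt.comp z hφ).const_mul a.2⁻¹
  refine (hcomp.congr_of_eventuallyEq ?_).congr_fderiv ?_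
  · filter_upwards [hφ.continuousAt.eventually h] with z' hz'
    simp [hz', rescaled, smul_smul, ha]
  · ext v
    simp [smul_smul, ha, hx]

end Rescaling

section Tiling

variable {E : Type*} [NormedAddCommGroup E] [NormedSpace ℝ E] [FiniteDimensional ℝ E]
  [MeasurableSpace E] [BorelSpace E] (μ : Measure E) [μ.IsAddHaarMeasure]

theorem measure_closedBall_le_rescaledCopy {S : Set E} {a : E × ℝ} (ha : 0 < a.2) {ρ : ℝ}
    (hρ : 0 < ρ) (hS : Metric.ball 0 ρ ⊆ S) {R : ℝ} (hR : 0 ≤ R) :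
    μ (Metric.closedBall a.1 (3 * (a.2 * R))) ≤
      ((3 * R / ρ) ^ Module.finrank ℝ E).toNNReal * μ (rescaledCopy a S) :=
  calc μ (Metric.closedBall a.1 (3 * (a.2 * R)))
      = ENNReal.ofReal ((3 * R / ρ) ^ Module.finrank ℝ E) * μ (Metric.ball a.1 (a.2 * ρ)) := by
        rw [Measure.addHaar_closedBall _ _ (by positivity),
          Measure.addHaar_ball_of_pos μ a.1 (r := a.2 * ρ) (by positivity),
          ← mul_assoc (ENNReal.ofReal _), ← ENNReal.ofReal_mul (by positivity), ← mul_pow]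
        congr 3
        field_simp
    _ ≤ _ := by
        rw [ENNReal.ofReal]
        gcongr
        exact ball_subset_rescaledCopy ha hS

theorem exists_pairwiseDisjoint_rescaledCopy_closure_ae_covering {Ω P : Set E} (hΩ : IsOpen Ω)
    (hPb : IsBounded P) (hP0 : P ∈ 𝓝 0) :
    ∃ U : Set (E × ℝ), U.Countable ∧ (∀ a ∈ U, 0 < a.2 ∧ rescaledCopy a (closure P) ⊆ Ω) ∧
      U.PairwiseDisjoint (rescaledCopy · (closure P)) ∧
      μ (Ω \ ⋃ a ∈ U, rescaledCopy a (closure P)) = 0 := by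
  obtain ⟨R, hR0, hR⟩ := hPb.subset_closedBall_lt 0 0
  obtain ⟨ρ, hρ0, hρ⟩ := Metric.mem_nhds_iff.1 hP0
  have hρc : Metric.ball 0 ρ ⊆ closure P := hρ.trans subset_closure
  have hRc : closure P ⊆ Metric.closedBall 0 R := closure_minimal hR Metric.isClosed_closedBall
  obtain ⟨U, hUt, hUc, hUd, hU⟩ := Vitali.exists_disjoint_covering_ae μ Ω
    {a : E × ℝ | 0 < a.2 ∧ rescaledCopy a (closure P) ⊆ Ω}
    ((3 * R / ρ) ^ Module.finrank ℝ E).toNNReal (fun a => a.2 * R) Prod.fst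
    (rescaledCopy · (closure P))
    (fun a ha => rescaledCopy_subset_closedBall ha.1 hRc)
    (fun a ha => measure_closedBall_le_rescaledCopy μ ha.1 hρ0 hρc hR0.le)
    (fun a ha => ⟨a.1, mem_interior.2 ⟨_, ball_subset_rescaledCopy ha.1 hρc, Metric.isOpen_ball,
      Metric.mem_ball_self (mul_pos ha.1 hρ0)⟩⟩)
    (fun a _ => isClosed_rescaledCopy isClosed_closure)
    (fun x hx ε hε => by
      obtain ⟨δ, hδ0, hδ⟩ := Metric.isOpen_iff.1 hΩ x hx
      set r := min (δ / (2 * R)) (ε / R)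
      have hr : 0 < r := by positivity
      refine ⟨(x, r), ⟨hr, fun y hy => hδ ?_⟩, ?_, rfl⟩
      · have := rescaledCopy_subset_closedBall hr hRc hy
        rw [Metric.mem_closedBall] at this
        rw [Metric.mem_ball]
        calc dist y x ≤ r * R := this
          _ ≤ δ / (2 * R) * R := by gcongr; exact min_le_left _ _
          _ < δ := by field_simp; linarith
      · calc r * R ≤ ε / R * R := by gcongr; exact min_le_right _ _
          _ = ε := by field_simp)
  exact ⟨U, hUc, hUt, hUd, hU⟩

theorem exists_pairwiseDisjoint_rescaledCopy_ae_covering {Ω P : Set E} (hΩ : IsOpen Ω)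
    (hPb : IsBounded P) (hP0 : P ∈ 𝓝 0) (hPf : μ (frontier P) = 0) :
    ∃ U : Set (E × ℝ), U.Countable ∧ (∀ a ∈ U, 0 < a.2 ∧ rescaledCopy a P ⊆ Ω) ∧
      U.PairwiseDisjoint (rescaledCopy · P) ∧ μ (Ω \ ⋃ a ∈ U, rescaledCopy a P) = 0 := by
  obtain ⟨U, hUc, hU, hUd, hUnull⟩ :=
    exists_pairwiseDisjoint_rescaledCopy_closure_ae_covering μ hΩ hPb hP0
  have hsub : ∀ a, rescaledCopy a P ⊆ rescaledCopy a (closure P) :=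
    fun a => preimage_mono subset_closure
  refine ⟨U, hUc, fun a ha => ⟨(hU a ha).1, (hsub a).trans (hU a ha).2⟩, hUd.mono hsub, ?_⟩
  refine measure_mono_null (t := (Ω \ ⋃ a ∈ U, rescaledCopy a (closure P)) ∪
      ⋃ a ∈ U, rescaledCopy a (frontier P)) ?_
    (measure_union_null hUnull ((measure_biUnion_null_iff hUc).2 fun a ha =>
      measure_rescaledCopy_eq_zero μ (hU a ha).1.ne' hPf))
  rintro x ⟨hxΩ, hxU⟩
  by_cases hx : ∃ a ∈ U, x ∈ rescaledCopy a (closure P)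
  · obtain ⟨a, ha, hxa⟩ := hx
    refine Or.inr (mem_biUnion ha ⟨hxa, fun hint =>
      hxU (mem_biUnion ha (show x ∈ rescaledCopy a P from interior_subset (s := P) hint))⟩)
  · exact Or.inl ⟨hxΩ, by simpa using hx⟩

theorem exists_lipschitzWith_tiling {Ω P : Set E} {w : E → ℝ} {K : ℝ≥0} (hΩ : IsOpen Ω)
    (hPo : IsOpen P) (hPb : IsBounded P) (hP0 : (0 : E) ∈ P) (hPf : μ (frontier P) = 0)
    (hw : LipschitzWith K w) (hwP : ∀ z ∈ P, 0 < w z) (hwPc : ∀ z ∉ P, w z = 0) :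
    ∃ u : E → ℝ, LipschitzWith K u ∧ (∀ x ∉ Ω, u x = 0) ∧ (∀ x, 0 ≤ u x) ∧
      ∀ᵐ x ∂μ, x ∈ Ω → 0 < u x ∧ ∃ z ∈ P, HasFDerivAt w (fderiv ℝ u x) z := by
  obtain ⟨U, -, hU, hUd, hUnull⟩ :=
    exists_pairwiseDisjoint_rescaledCopy_ae_covering μ hΩ hPb (hPo.mem_nhds hP0) hPf
  have hw0 : ∀ z, 0 ≤ w z := fun z => by
    by_cases hz : z ∈ P
    exacts [(hwP z hz).le, (hwPc z hz).ge]
  let f : U → E → ℝ := fun a => rescaled a w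
  have hS : Pairwise (Disjoint on fun a : U => rescaledCopy a.1 P) := fun a b hab =>
    hUd a.2 b.2 (Subtype.coe_ne_coe.2 hab)
  have hfS : ∀ a : U, ∀ x ∉ rescaledCopy a.1 P, f a x = 0 := fun a x hx => by
    simp [f, rescaled, hwPc _ hx]
  have hf0 : ∀ a x, 0 ≤ f a x := fun a x => mul_nonneg (hU a a.2).1.le (hw0 _)
  have hu := lipschitzWith_tsum_of_pairwise_disjoint hS hfS
    (fun a => lipschitzWith_rescaled (hU a a.2).1 hw) hf0
  refine ⟨_, hu, fun x hx => ?_, fun x => tsum_nonneg (hf0 · x), ?_⟩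
  · simp only [hfS _ x fun hxa => hx ((hU _ (Subtype.prop _)).2 hxa), tsum_zero]
  filter_upwards [measure_eq_zero_iff_ae_notMem.1 hUnull, hu.ae_differentiableAt (μ := μ)]
    with x hxU hdiff hxΩ
  obtain ⟨a, ha, hxa⟩ : ∃ a ∈ U, x ∈ rescaledCopy a P := by simpa [hxΩ] using hxU
  have heq : (fun x => ∑' b, f b x) =ᶠ[𝓝 x] rescaled a w :=
    eventually_of_mem ((isOpen_rescaledCopy hPo).mem_nhds hxa) fun y hy =>
      tsum_eq_of_mem_of_pairwise_disjoint hS hfS (i := ⟨a, ha⟩) hy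
  refine ⟨?_, _, hxa, hasFDerivAt_of_eventuallyEq_rescaled (hU a ha).1.ne' hdiff heq⟩
  rw [heq.eq_of_nhds]
  exact mul_pos (hU a ha).1 (hwP _ hxa)

end Tiling

theorem exists_lipschitzWith_grad_mem_of_zero_mem_interior_convexHull {n : ℕ}
    {Ω F : Set (Fin n → ℝ)} (hΩo : IsOpen Ω) (hΩb : IsBounded Ω) (hΩne : Ω.Nonempty)
    (h0 : (0 : Fin n → ℝ) ∈ interior (convexHull ℝ F)) :
    ∃ (u : (Fin n → ℝ) → ℝ) (C : ℝ≥0), LipschitzWith C u ∧ (∀ x ∉ Ω, u x = 0) ∧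
      (∀ᵐ x, x ∈ Ω → grad u x ∈ F) ∧ (∀ x, 0 ≤ u x) ∧ 0 < ∫ x in Ω, u x := by
  obtain ⟨G, hGF, hG0⟩ := exists_finset_subset_mem_interior_convexHull h0
  obtain ⟨ε, hε, hεG⟩ := Metric.mem_nhds_iff.1 (mem_interior_iff_mem_nhds.1 hG0)
  have hG : G.Nonempty := by
    by_contra! h
    simp [h] at hG0
  obtain ⟨K, hK⟩ := exists_lipschitzWith_pyramid G hG
  obtain ⟨u, hu, hzero, hnonneg, hae⟩ := exists_lipschitzWith_tiling volume hΩo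
    (isOpen_polytope G)
    (Metric.isBounded_closedBall.subset (polytope_subset_closedBall G (half_pos hε)
      ((Metric.closedBall_subset_ball (half_lt_self hε)).trans hεG)))
    (zero_mem_polytope G) ((convex_polytope G).addHaar_frontier volume) hK
    (fun z hz => (pyramid_pos_iff G hG).2 hz)
    (fun z hz => pyramid_eq_zero G hG hz)
  refine ⟨u, K, hu, hzero, ?_, hnonneg, ?_⟩
  · filter_upwards [hae] with x hx hxΩ
    obtain ⟨-, z, hz, hderiv⟩ := hx hxΩ
    obtain ⟨v, hv, hfv⟩ := exists_fderiv_pyramid_eq G hG hz hderiv.differentiableAt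
    rw [grad_eq_of_fderiv_apply fun y => by rw [← hderiv.fderiv, hfv]]
    exact hGF hv
  · have hint : IntegrableOn u Ω :=
      (hu.continuous.continuousOn.integrableOn_compact hΩb.isCompact_closure).mono_set
        subset_closure
    rw [setIntegral_pos_iff_support_of_nonneg_ae (ae_of_all _ hnonneg) hint]
    exact (hΩo.measure_pos volume hΩne).trans_le
      (measure_mono_ae (hae.mono fun x hx hxΩ => ⟨(hx hxΩ).1.ne', hxΩ⟩))

/-- For `Ω ⊆ ℝⁿ` open, bounded and nonempty and `F ⊆ ℝⁿ`, there exists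
`u ∈ W₀^{1,∞}(Ω)` with `Du ∈ F` a.e. in `Ω` iff `0 ∈ F ∪ int (co F)`; moreover, when
`0 ∈ int (co F)`, `u` can be chosen with `u ≥ 0` and `∫_Ω u > 0`. -/
theorem stmt8 {n : ℕ} (Ω : Set (Fin n → ℝ)) (hΩo : IsOpen Ω)
    (hΩb : Bornology.IsBounded Ω) (hΩne : Ω.Nonempty) (F : Set (Fin n → ℝ)) :
    ((∃ (u : (Fin n → ℝ) → ℝ) (C : NNReal), LipschitzWith C u ∧ (∀ x ∉ Ω, u x = 0) ∧
        (∀ᵐ x ∂(volume : Measure (Fin n → ℝ)), x ∈ Ω → grad u x ∈ F)) ↔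
      (0 : Fin n → ℝ) ∈ F ∪ interior (convexHull ℝ F)) ∧
    ((0 : Fin n → ℝ) ∈ interior (convexHull ℝ F) →
      ∃ (u : (Fin n → ℝ) → ℝ) (C : NNReal), LipschitzWith C u ∧ (∀ x ∉ Ω, u x = 0) ∧
        (∀ᵐ x ∂(volume : Measure (Fin n → ℝ)), x ∈ Ω → grad u x ∈ F) ∧
        (∀ x, 0 ≤ u x) ∧ 0 < ∫ x in Ω, u x) := by
  have hconstr := fun h0 =>
    exists_lipschitzWith_grad_mem_of_zero_mem_interior_convexHull (F := F) hΩo hΩb hΩne h0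
  refine ⟨⟨fun ⟨u, C, hu, hz, hF⟩ =>
    zero_mem_union_interior_convexHull_of_grad_mem hΩo hΩb hΩne hu hz hF, ?_⟩, hconstr⟩
  rintro (h0 | h0)
  · refine ⟨0, 0, LipschitzWith.const 0, fun _ _ => rfl, ae_of_all _ fun x _ => ?_⟩
    rwa [grad_zero]
  · obtain ⟨u, C, hu, hz, hF, -⟩ := hconstr h0
    exact ⟨u, C, hu, hz, hF⟩
end
end

section
/- Let n ≥ 2, b ∈ R^n nonzero, and S an n-dimensional linear subspace of the space of real symmetric n×n matrices. Then S = R^n ∨ b if and only if Ab = 0 for every A in the orthogonal complement S^⊥ of S (inside the symmetric matrices, with respect to the Frobenius inner product). -/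
noncomputable section
open Matrix

/-- The Frobenius inner product of two matrices. -/
def frob {m n : ℕ} (A B : Matrix (Fin m) (Fin n) ℝ) : ℝ := (Aᵀ * B).trace

/-- The symmetric product `x ∨ y = x yᵀ + y xᵀ` of vectors in `ℝⁿ`. -/
def symProd {n : ℕ} (x y : Fin n → ℝ) : Matrix (Fin n) (Fin n) ℝ :=
  vecMulVec x y + vecMulVec y x

/-- The subspace `ℝⁿ ∨ b = {x ∨ b : x ∈ ℝⁿ}` of `n × n` matrices. -/
def symLine (n : ℕ) (b : Fin n → ℝ) : Submodule ℝ (Matrix (Fin n) (Fin n) ℝ) where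
  carrier := {M | ∃ x : Fin n → ℝ, M = symProd x b}
  add_mem' := by
    rintro M N ⟨x, rfl⟩ ⟨y, rfl⟩
    exact ⟨x + y, by ext i j; simp [symProd, vecMulVec_apply]; ring⟩
  zero_mem' := ⟨0, by ext i j; simp [symProd, vecMulVec_apply]⟩
  smul_mem' := by
    rintro c M ⟨x, rfl⟩
    exact ⟨c • x, by ext i j; simp [symProd, vecMulVec_apply]; ring⟩

/-! For symmetric `A` one has `frob A (x ∨ b) = 2 xᵀ A b`; taking `x = A b` shows that `A` is
orthogonal to `ℝⁿ ∨ b` iff `A b = 0`. The condition therefore says that every symmetric matrix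
orthogonal to `S` is orthogonal to `ℝⁿ ∨ b`. Both subspaces consist of symmetric matrices, so
the projection argument behind `Kᗮᗮ = K`, run inside the symmetric matrices, gives
`ℝⁿ ∨ b ≤ S`. Equality follows by dimension count: `x ↦ x ∨ b` is injective when `b ≠ 0`. -/

open scoped RealInnerProductSpace

theorem Submodule.le_of_orthogonal_inf_le_orthogonal {𝕜 E : Type*} [RCLike 𝕜]
    [NormedAddCommGroup E] [InnerProductSpace 𝕜 E] {S T V : Submodule 𝕜 E}
    [S.HasOrthogonalProjection] (hSV : S ≤ V) (hTV : T ≤ V) (h : Sᗮ ⊓ V ≤ Tᗮ) : T ≤ S := by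
  intro t ht
  obtain ⟨s, hs, z, hz, rfl⟩ := S.exists_add_mem_mem_orthogonal t
  have hzV : z ∈ V := by simpa using V.sub_mem (hTV ht) (hSV hs)
  have hzs : inner 𝕜 s z = 0 := hz s hs
  have hzz : inner 𝕜 z z = 0 := by
    simpa [inner_add_left, hzs] using h ⟨hz, hzV⟩ _ ht
  simpa [inner_self_eq_zero.mp hzz] using hs

namespace Matrix

def symmetricSubmodule (R ι : Type*) [CommSemiring R] : Submodule R (Matrix ι ι R) where
  carrier := {A | A.IsSymm}
  add_mem' := IsSymm.add
  zero_mem' := isSymm_zero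
  smul_mem' c _ h := h.smul c

end Matrix

-- Flattening identifies `frob` with the Euclidean inner product, which provides the projections.
def frobEquiv (m n : ℕ) : Matrix (Fin m) (Fin n) ℝ ≃ₗ[ℝ] EuclideanSpace ℝ (Fin m × Fin n) where
  toFun A := WithLp.toLp 2 fun p => A p.1 p.2
  invFun v := Matrix.of fun i j => v (i, j)
  map_add' _ _ := rfl
  map_smul' _ _ := rfl
  left_inv _ := rfl
  right_inv _ := rfl

lemma frobEquiv_apply {m n : ℕ} (A : Matrix (Fin m) (Fin n) ℝ) (p : Fin m × Fin n) :
    frobEquiv m n A p = A p.1 p.2 := rfl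

section Frobenius

variable {m n : ℕ}

lemma frob_eq_sum (A B : Matrix (Fin m) (Fin n) ℝ) : frob A B = ∑ i, ∑ j, A i j * B i j := by
  simp only [frob, trace, diag, mul_apply, transpose_apply]
  exact Finset.sum_comm

lemma inner_frobEquiv (A B : Matrix (Fin m) (Fin n) ℝ) :
    ⟪frobEquiv m n A, frobEquiv m n B⟫ = frob A B := by
  simp [PiLp.inner_apply, frobEquiv_apply, frob_eq_sum, Fintype.sum_prod_type, mul_comm]

lemma frobEquiv_mem_orthogonal_map_iff (A : Matrix (Fin m) (Fin n) ℝ)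
    (S : Submodule ℝ (Matrix (Fin m) (Fin n) ℝ)) :
    frobEquiv m n A ∈ (S.map (frobEquiv m n).toLinearMap)ᗮ ↔ ∀ B ∈ S, frob A B = 0 := by
  simp only [Submodule.mem_orthogonal', Submodule.mem_map, forall_exists_index, and_imp,
    forall_apply_eq_imp_iff₂, LinearEquiv.coe_coe, inner_frobEquiv]

lemma le_of_frob_orthogonal {S T V : Submodule ℝ (Matrix (Fin m) (Fin n) ℝ)}
    (hSV : S ≤ V) (hTV : T ≤ V)
    (h : ∀ A ∈ V, (∀ B ∈ S, frob A B = 0) → ∀ B ∈ T, frob A B = 0) : T ≤ S := by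
  rw [← Submodule.map_le_map_iff_of_injective (frobEquiv m n).injective]
  refine Submodule.le_of_orthogonal_inf_le_orthogonal (Submodule.map_mono hSV)
    (Submodule.map_mono hTV) ?_
  rintro _ ⟨hS, A, hA, rfl⟩
  exact (frobEquiv_mem_orthogonal_map_iff A T).2 <|
    h A hA <| (frobEquiv_mem_orthogonal_map_iff A S).1 hS

lemma frob_add_right (A B C : Matrix (Fin m) (Fin n) ℝ) :
    frob A (B + C) = frob A B + frob A C := by
  simp only [frob, Matrix.mul_add, trace_add]

lemma frob_vecMulVec (A : Matrix (Fin m) (Fin n) ℝ) (x : Fin m → ℝ) (y : Fin n → ℝ) :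
    frob A (vecMulVec x y) = x ⬝ᵥ A *ᵥ y := by
  rw [frob, mul_vecMulVec, trace_vecMulVec, mulVec_transpose, dotProduct_mulVec]

end Frobenius

section SymLine

variable {n : ℕ}

lemma frob_symProd {A : Matrix (Fin n) (Fin n) ℝ} (hA : A.IsSymm) (x b : Fin n → ℝ) :
    frob A (symProd x b) = 2 * (x ⬝ᵥ A *ᵥ b) := by
  have hswap : b ⬝ᵥ A *ᵥ x = x ⬝ᵥ A *ᵥ b := by
    rw [dotProduct_mulVec, ← mulVec_transpose, hA.eq, dotProduct_comm]
  rw [symProd, frob_add_right, frob_vecMulVec, frob_vecMulVec, hswap, two_mul]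

lemma forall_frob_symLine_eq_zero_iff {b : Fin n → ℝ} {A : Matrix (Fin n) (Fin n) ℝ} (hA : A.IsSymm) :
    (∀ B ∈ symLine n b, frob A B = 0) ↔ A *ᵥ b = 0 := by
  refine ⟨fun h ↦ ?_, fun h ↦ ?_⟩
  · have := h _ ⟨A *ᵥ b, rfl⟩
    rw [frob_symProd hA] at this
    exact dotProduct_self_eq_zero.mp (by linarith)
  · rintro _ ⟨x, rfl⟩
    simp [frob_symProd hA, h]

lemma symProd_isSymm (x b : Fin n → ℝ) : (symProd x b).IsSymm := by
  simp [symProd, IsSymm, transpose_add, transpose_vecMulVec, add_comm]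

lemma symLine_le_symmetricSubmodule (b : Fin n → ℝ) :
    symLine n b ≤ symmetricSubmodule ℝ (Fin n) := by
  rintro _ ⟨x, rfl⟩
  exact symProd_isSymm x b

lemma eq_zero_of_symProd_eq_zero {b : Fin n → ℝ} (hb : b ≠ 0) {x : Fin n → ℝ} (hx : symProd x b = 0) :
    x = 0 := by
  obtain ⟨k, hk⟩ := Function.ne_iff.mp hb
  have entry (i j : Fin n) : x i * b j + b i * x j = 0 := by
    simpa [symProd, vecMulVec_apply] using congrFun₂ hx i j
  have hxk : x k = 0 := by
    have hkk : x k * b k = 0 := by linarith [entry k k]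
    exact (mul_eq_zero.mp hkk).resolve_right hk
  funext i
  have hik := entry i k
  rw [hxk, mul_zero, add_zero] at hik
  exact (mul_eq_zero.mp hik).resolve_right hk

def symProdLeft (b : Fin n → ℝ) : (Fin n → ℝ) →ₗ[ℝ] Matrix (Fin n) (Fin n) ℝ :=
  (vecMulVecBilin ℝ ℝ).flip b + vecMulVecBilin ℝ ℝ b

lemma symProdLeft_apply (b x : Fin n → ℝ) : symProdLeft b x = symProd x b := rfl

lemma range_symProdLeft (b : Fin n → ℝ) : LinearMap.range (symProdLeft b) = symLine n b := by
  ext M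
  simp [symProdLeft_apply, symLine, eq_comm]

lemma finrank_symLine {b : Fin n → ℝ} (hb : b ≠ 0) : Module.finrank ℝ (symLine n b) = n := by
  rw [← range_symProdLeft, LinearMap.finrank_range_of_inj, Module.finrank_fin_fun]
  exact (injective_iff_map_eq_zero _).mpr fun x hx ↦ eq_zero_of_symProd_eq_zero hb hx

end SymLine

theorem stmt12_general {n : ℕ} (b : Fin n → ℝ) (hb : b ≠ 0)
    (S : Submodule ℝ (Matrix (Fin n) (Fin n) ℝ)) (hSsym : ∀ A ∈ S, A.IsSymm)
    (hdim : Module.finrank ℝ S = n) :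
    S = symLine n b ↔
      ∀ A : Matrix (Fin n) (Fin n) ℝ, A.IsSymm → (∀ B ∈ S, frob A B = 0) →
        A.mulVec b = 0 := by
  constructor
  · rintro rfl A hA hAS
    exact (forall_frob_symLine_eq_zero_iff hA).mp hAS
  · intro H
    have hle : symLine n b ≤ S :=
      le_of_frob_orthogonal (V := symmetricSubmodule ℝ (Fin n)) hSsym
        (symLine_le_symmetricSubmodule b)
        fun A hA hAS ↦ (forall_frob_symLine_eq_zero_iff hA).mpr (H A hA hAS)
    exact (Submodule.eq_of_le_of_finrank_eq hle (by rw [finrank_symLine hb, hdim])).symm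

/-- For `n ≥ 2`, nonzero `b ∈ ℝⁿ` and an `n`-dimensional subspace `S` of
symmetric `n × n` matrices, `S = ℝⁿ ∨ b` iff `A b = 0` for every `A` in the orthogonal
complement of `S` inside the symmetric matrices (w.r.t. the Frobenius inner product). -/
theorem stmt12 {n : ℕ} (hn : 2 ≤ n) (b : Fin n → ℝ) (hb : b ≠ 0)
    (S : Submodule ℝ (Matrix (Fin n) (Fin n) ℝ)) (hSsym : ∀ A ∈ S, A.IsSymm)
    (hdim : Module.finrank ℝ S = n) :
    S = symLine n b ↔
      ∀ A : Matrix (Fin n) (Fin n) ℝ, A.IsSymm → (∀ B ∈ S, frob A B = 0) →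
        A.mulVec b = 0 :=
  stmt12_general b hb S hSsym hdim
end
end

section
/- Let a, b, c, d be nonzero vectors in R^n. The set {a ∨ b, c ∨ d} of symmetric matrices is linearly dependent if and only if either ({a,c} is linearly dependent and {b,d} is linearly dependent) or ({a,d} is linearly dependent and {b,c} is linearly dependent). -/
/-!
The quadratic form of `x ∨ y` is `v ↦ 2 (x ⬝ v) (y ⬝ v)`, so `t (a ∨ b) = c ∨ d` makes the product
of linear forms `(c ⬝ ·) (d ⬝ ·)` equal to `t (a ⬝ ·) (b ⬝ ·)`. Then `ker (a ⬝ ·)` is covered by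
`ker (c ⬝ ·) ∪ ker (d ⬝ ·)`, and since a subspace is never the union of two proper subspaces it
lies in one of them: `c` or `d` is a multiple of `a`. Cancelling that factor leaves a product
`(a ⬝ ·) ℓ` that vanishes identically, so `ℓ = 0`, which says that the other vector is a multiple
of `b`.
-/

noncomputable section
open Matrix

namespace Submodule

variable {R M : Type*} [Ring R] [AddCommGroup M] [Module R M]

theorem le_or_le_of_subset_union {p q r : Submodule R M} (h : (p : Set M) ⊆ q ∪ r) :
    p ≤ q ∨ p ≤ r := by
  by_contra! hpq
  obtain ⟨x, hxp, hxq⟩ := SetLike.not_le_iff_exists.1 hpq.1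
  obtain ⟨y, hyp, hyr⟩ := SetLike.not_le_iff_exists.1 hpq.2
  have hxr : x ∈ r := (h hxp).resolve_left hxq
  have hyq : y ∈ q := (h hyp).resolve_right hyr
  rcases h (p.add_mem hxp hyp) with hq | hr
  · exact hxq (by simpa using q.sub_mem hq hyq)
  · exact hyr (by simpa using r.sub_mem hr hxr)

end Submodule

namespace Module.Dual

section Domain

variable {R M : Type*} [CommRing R] [NoZeroDivisors R] [AddCommGroup M] [Module R M]

theorem le_ker_or_le_ker_of_mul_eq_zero {p : Submodule R M} {g h : Dual R M}
    (H : ∀ x ∈ p, g x * h x = 0) : p ≤ LinearMap.ker g ∨ p ≤ LinearMap.ker h :=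
  Submodule.le_or_le_of_subset_union fun x hx ↦ mul_eq_zero.1 (H x hx)

theorem eq_zero_or_eq_zero_of_mul_eq_zero {g h : Dual R M} (H : ∀ x, g x * h x = 0) :
    g = 0 ∨ h = 0 := by
  simpa [top_le_iff] using le_ker_or_le_ker_of_mul_eq_zero (p := ⊤) fun x _ ↦ H x

end Domain

variable {K V : Type*} [Field K] [AddCommGroup V] [Module K V]

theorem exists_smul_eq_of_ker_le {f g : Dual K V} (h : LinearMap.ker f ≤ LinearMap.ker g) :
    ∃ l : K, l • f = g := by
  have : g ∈ Submodule.span K (Set.range fun _ : Unit ↦ f) :=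
    mem_span_of_iInf_ker_le_ker (by simpa using h)
  simpa [Submodule.mem_span_singleton] using this

theorem exists_smul_eq_of_mul_eq_smul_mul_of_ker_le {f g h k : Dual K V} {t : K}
    (H : ∀ x, h x * k x = t * (f x * g x)) (hf : f ≠ 0) (hh : h ≠ 0)
    (hker : LinearMap.ker f ≤ LinearMap.ker h) :
    (∃ l : K, l • f = h) ∧ ∃ m : K, m • g = k := by
  obtain ⟨l, rfl⟩ := exists_smul_eq_of_ker_le hker
  have hl : l ≠ 0 := by rintro rfl; exact hh (zero_smul K f)
  refine ⟨⟨l, rfl⟩, l⁻¹ * t, ?_⟩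
  have hfactor : ∀ x, f x * (t • g - l • k) x = 0 := fun x ↦ by
    simp only [LinearMap.sub_apply, LinearMap.smul_apply, smul_eq_mul] at H ⊢
    linear_combination -(H x)
  have hk := (eq_zero_or_eq_zero_of_mul_eq_zero hfactor).resolve_left hf
  rw [sub_eq_zero] at hk
  rw [mul_smul, hk, smul_smul, inv_mul_cancel₀ hl, one_smul]

theorem exists_smul_eq_of_mul_eq_smul_mul {f g h k : Dual K V} {t : K}
    (H : ∀ x, h x * k x = t * (f x * g x)) (hf : f ≠ 0) (hh : h ≠ 0) (hk : k ≠ 0) :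
    ((∃ l : K, l • f = h) ∧ ∃ m : K, m • g = k) ∨
      ((∃ l : K, l • f = k) ∧ ∃ m : K, m • g = h) := by
  have hvanish : ∀ x ∈ LinearMap.ker f, h x * k x = 0 := fun x hx ↦ by
    rw [H, LinearMap.mem_ker.1 hx, zero_mul, mul_zero]
  rcases le_ker_or_le_ker_of_mul_eq_zero hvanish with hker | hker
  · exact .inl (exists_smul_eq_of_mul_eq_smul_mul_of_ker_le H hf hh hker)
  · have H' : ∀ x, k x * h x = t * (f x * g x) := fun x ↦ by rw [mul_comm, H]
    exact .inr (exists_smul_eq_of_mul_eq_smul_mul_of_ker_le H' hf hk hker)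

end Module.Dual

section SymProd

variable {n : ℕ}

theorem dotProduct_symProd_mulVec (u v x : Fin n → ℝ) :
    x ⬝ᵥ (symProd u v *ᵥ x) = 2 * ((u ⬝ᵥ x) * (v ⬝ᵥ x)) := by
  rw [dotProduct_mulVec, symProd, vecMul_add, vecMul_vecMulVec, vecMul_vecMulVec, add_dotProduct,
    smul_dotProduct, smul_dotProduct, smul_eq_mul, smul_eq_mul, dotProduct_comm x u,
    dotProduct_comm x v]
  ring

theorem symProd_comm (u v : Fin n → ℝ) : symProd u v = symProd v u :=
  add_comm _ _

theorem symProd_smul_smul (k l : ℝ) (u v : Fin n → ℝ) :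
    symProd (k • u) (l • v) = (k * l) • symProd u v := by
  simp only [symProd, smul_vecMulVec, vecMulVec_smul, smul_add, smul_smul, mul_comm l k]

theorem symProd_ne_zero {u v : Fin n → ℝ} (hu : u ≠ 0) (hv : v ≠ 0) : symProd u v ≠ 0 := by
  intro h
  have H : ∀ x, dotProductEquiv ℝ _ u x * dotProductEquiv ℝ _ v x = 0 := fun x ↦ by
    simpa [h] using (dotProduct_symProd_mulVec u v x).symm
  simpa [hu, hv] using Module.Dual.eq_zero_or_eq_zero_of_mul_eq_zero H

theorem exists_smul_eq_of_smul_symProd_eq {a b c d : Fin n → ℝ}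
    (ha : a ≠ 0) (hc : c ≠ 0) (hd : d ≠ 0) {t : ℝ} (h : t • symProd a b = symProd c d) :
    ((∃ k : ℝ, k • a = c) ∧ ∃ m : ℝ, m • b = d) ∨
      ((∃ k : ℝ, k • a = d) ∧ ∃ m : ℝ, m • b = c) := by
  set φ := dotProductEquiv ℝ (Fin n)
  have H : ∀ x, φ c x * φ d x = t * (φ a x * φ b x) := fun x ↦ by
    have := congrArg (fun M ↦ x ⬝ᵥ (M *ᵥ x)) h
    simp only [smul_mulVec, dotProduct_smul, dotProduct_symProd_mulVec, smul_eq_mul] at this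
    simp only [φ, dotProductEquiv_apply_apply]
    linarith
  simpa [φ, ← map_smul] using
    Module.Dual.exists_smul_eq_of_mul_eq_smul_mul H (by simpa [φ]) (by simpa [φ]) (by simpa [φ])

end SymProd

/-- For nonzero `a, b, c, d ∈ ℝⁿ`, `{a ∨ b, c ∨ d}` is linearly dependent
iff (`{a,c}` and `{b,d}` are both linearly dependent) or (`{a,d}` and `{b,c}` are both
linearly dependent). -/
theorem stmt17 {n : ℕ} (a b c d : Fin n → ℝ)
    (ha : a ≠ 0) (hb : b ≠ 0) (hc : c ≠ 0) (hd : d ≠ 0) :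
    ¬ LinearIndependent ℝ ![symProd a b, symProd c d] ↔
      (¬ LinearIndependent ℝ ![a, c] ∧ ¬ LinearIndependent ℝ ![b, d]) ∨
      (¬ LinearIndependent ℝ ![a, d] ∧ ¬ LinearIndependent ℝ ![b, c]) := by
  simp only [LinearIndependent.pair_iff' (symProd_ne_zero ha hb), LinearIndependent.pair_iff' ha,
    LinearIndependent.pair_iff' hb, not_forall, not_not]
  constructor
  · rintro ⟨t, h⟩
    exact exists_smul_eq_of_smul_symProd_eq ha hc hd h
  · rintro (⟨⟨k, rfl⟩, m, rfl⟩ | ⟨⟨k, rfl⟩, m, rfl⟩)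
    · exact ⟨k * m, (symProd_smul_smul k m a b).symm⟩
    · exact ⟨k * m, by rw [symProd_comm (m • b), symProd_smul_smul]⟩
end
end

section
/- Let W = span{e^1 ∨ (e^1 + e^2), e^2 ∨ e^2} ⊆ Sym(2), where e^1, e^2 is the standard basis of R^2. Then dim W = 2, and W ∩ (x ∨ R^2) ≠ {0} for every nonzero x ∈ R^2, yet there is no nonzero b ∈ R^2 with W = R^2 ∨ b. -/
noncomputable section
open Matrix

/-!
In coordinates `W` is spanned by `𝔸 = e¹ ∨ (e¹ + e²)` and `𝔹 = e² ∨ e²`, which are independent.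
For every `x`, `x ∨ (x₀, x₀ - x₁) = x₀² 𝔸 + x₁ (x₀ - x₁) 𝔹`, and this is nonzero when `x ≠ 0`.
If `W = ℝ² ∨ b`, then `𝔹 = u ∨ b` for some `u`, which forces `b₀ = 0`; but then every element of
`ℝ² ∨ b` vanishes at `(0, 0)`, while `𝔸` does not.
-/

local notation "𝔸" => !![(2 : ℝ), 1; 1, 0]
local notation "𝔹" => !![(0 : ℝ), 0; 0, 2]

@[simp]
theorem symProd_apply {n : ℕ} (x y : Fin n → ℝ) (i j : Fin n) :
    symProd x y i j = x i * y j + y i * x j := by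
  simp [symProd, vecMulVec_apply]

theorem symProd_single_zero_add_single_one :
    symProd (Pi.single 0 1) (Pi.single 0 1 + Pi.single 1 1) = 𝔸 := by
  ext i j; fin_cases i <;> fin_cases j <;> norm_num

theorem symProd_single_one_self : symProd (Pi.single 1 1) (Pi.single 1 1) = 𝔹 := by
  ext i j; fin_cases i <;> fin_cases j <;> norm_num

theorem linearIndependent_A_B : LinearIndependent ℝ ![𝔸, 𝔹] := by
  rw [LinearIndependent.pair_iff]
  intro s t hst
  have h01 := congrFun₂ hst 0 1
  have h11 := congrFun₂ hst 1 1
  simp at h01 h11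
  exact ⟨h01, h11⟩

theorem finrank_span_A_B : Module.finrank ℝ (Submodule.span ℝ {𝔸, 𝔹}) = 2 := by
  rw [← range_cons_cons_empty, finrank_span_eq_card linearIndependent_A_B]
  simp

theorem symProd_mem_span_A_B (x : Fin 2 → ℝ) :
    symProd x ![x 0, x 0 - x 1] ∈ Submodule.span ℝ {𝔸, 𝔹} := by
  have hxy : symProd x ![x 0, x 0 - x 1] = (x 0 ^ 2) • 𝔸 + (x 1 * (x 0 - x 1)) • 𝔹 := by
    ext i j; fin_cases i <;> fin_cases j <;> simp <;> ring
  exact hxy ▸ Submodule.mem_span_pair.2 ⟨_, _, rfl⟩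

theorem symProd_ne_zero_s18 (x : Fin 2 → ℝ) (hx : x ≠ 0) : symProd x ![x 0, x 0 - x 1] ≠ 0 := by
  intro h
  have h00 := congrFun₂ h 0 0
  have h11 := congrFun₂ h 1 1
  simp at h00 h11
  apply hx
  ext i; fin_cases i <;> simp <;> nlinarith

theorem apply_zero_eq_zero_of_symProd_eq_B (u b : Fin 2 → ℝ) (h : symProd u b = 𝔹) : b 0 = 0 := by
  have h00 := congrFun₂ h 0 0
  have h01 := congrFun₂ h 0 1
  have h11 := congrFun₂ h 1 1
  simp at h00 h01 h11
  by_contra hb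
  have hu0 : u 0 = 0 := (mul_eq_zero.1 (by linarith : u 0 * b 0 = 0)).resolve_right hb
  have hu1 : u 1 = 0 := (mul_eq_zero.1 (by simpa [hu0] using h01 : b 0 * u 1 = 0)).resolve_left hb
  simp [hu1] at h11

/-- For `W = span {e¹ ∨ (e¹ + e²), e² ∨ e²} ⊆ Sym(2)`: `dim W = 2`,
`W ∩ (x ∨ ℝ²) ≠ {0}` for every nonzero `x ∈ ℝ²`, but `W ≠ ℝ² ∨ b` for every nonzero
`b ∈ ℝ²`. -/
theorem stmt18 (e1 e2 : Fin 2 → ℝ) (he1 : e1 = Pi.single 0 1) (he2 : e2 = Pi.single 1 1)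
    (W : Submodule ℝ (Matrix (Fin 2) (Fin 2) ℝ))
    (hW : W = Submodule.span ℝ {symProd e1 (e1 + e2), symProd e2 e2}) :
    Module.finrank ℝ W = 2 ∧
      (∀ x : Fin 2 → ℝ, x ≠ 0 →
        ∃ M : Matrix (Fin 2) (Fin 2) ℝ, M ∈ W ∧ M ≠ 0 ∧
          ∃ y : Fin 2 → ℝ, M = symProd x y) ∧
      ¬ ∃ b : Fin 2 → ℝ, b ≠ 0 ∧ W = symLine 2 b := by
  subst he1 he2 hW
  rw [symProd_single_zero_add_single_one, symProd_single_one_self]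
  refine ⟨finrank_span_A_B,
    fun x hx => ⟨_, symProd_mem_span_A_B x, symProd_ne_zero_s18 x hx, _, rfl⟩, ?_⟩
  rintro ⟨b, -, hWb⟩
  obtain ⟨x, hx⟩ : 𝔸 ∈ symLine 2 b := hWb ▸ Submodule.subset_span (by simp)
  obtain ⟨u, hu⟩ : 𝔹 ∈ symLine 2 b := hWb ▸ Submodule.subset_span (by simp)
  have h00 := congrFun₂ hx 0 0
  simp [apply_zero_eq_zero_of_symProd_eq_B u b hu.symm] at h00
end
end
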